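/- For every fixed real q, the function Φ(r,q) = 2r ψ'(r+1-q) + r^2 ψ''(r+1-q) tends to 1 as r → ∞. -/

import Mathlib

open Filter Finset

/-- Trigamma function, via its series representation. -/
noncomputable def trigamma (x : ℝ) : ℝ := ∑' j : ℕ, 1 / (x + j) ^ 2

/-- Tetragamma function, via its series representation. -/
noncomputable def tetragamma (x : ℝ) : ℝ := -2 * ∑' j : ℕ, 1 / (x + j) ^ 3

-- elementary telescoping inequalities
lemma ineq1 {a : ℝ} (ha : 0 < a) : 1 / (a + 1) ^ 2 ≤ 1 / a - 1 / (a + 1) := by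
  rw [div_sub_div _ _ (ne_of_gt ha) (by positivity), div_le_div_iff₀ (by positivity) (by positivity)]
  nlinarith

lemma ineq2 {a : ℝ} (ha : 0 < a) : 1 / a - 1 / (a + 1) ≤ 1 / a ^ 2 := by
  rw [div_sub_div _ _ (ne_of_gt ha) (by positivity), div_le_div_iff₀ (by positivity) (by positivity)]
  nlinarith

lemma ineq3 {a : ℝ} (ha : 0 < a) :
    1 / (a + 1) ^ 3 ≤ 1 / (2 * a ^ 2) - 1 / (2 * (a + 1) ^ 2) := by
  rw [div_sub_div _ _ (by positivity) (by positivity), div_le_div_iff₀ (by positivity) (by positivity)]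
  nlinarith [sq_nonneg a, pow_pos ha 2]

lemma ineq4 {a : ℝ} (ha : 0 < a) :
    1 / (2 * a ^ 2) - 1 / (2 * (a + 1) ^ 2) ≤ 1 / a ^ 3 := by
  rw [div_sub_div _ _ (by positivity) (by positivity), div_le_div_iff₀ (by positivity) (by positivity)]
  nlinarith [pow_pos ha 2, pow_pos ha 3]

lemma xj_pos {x : ℝ} (hx : 0 < x) (j : ℕ) : 0 < x + j := by positivity

-- partial sum bounds, squares
lemma sum2_upper {x : ℝ} (hx : 0 < x) (n : ℕ) :
    ∑ j ∈ range (n + 1), 1 / (x + j) ^ 2 ≤ 1 / x ^ 2 + 1 / x - 1 / (x + n) := by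
  induction n with
  | zero => simp
  | succ n ih =>
    rw [Finset.sum_range_succ]
    have h := ineq1 (xj_pos hx n)
    push_cast
    push_cast at ih
    have e : x + ((n : ℝ) + 1) = (x + n) + 1 := by ring
    rw [e]
    linarith

lemma sum2_lower {x : ℝ} (hx : 0 < x) (n : ℕ) :
    1 / x - 1 / (x + n) ≤ ∑ j ∈ range n, 1 / (x + j) ^ 2 := by
  induction n with
  | zero => simp
  | succ n ih =>
    rw [Finset.sum_range_succ]
    have h := ineq2 (xj_pos hx n)
    push_cast
    push_cast at ih
    have e : x + ((n : ℝ) + 1) = (x + n) + 1 := by ring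
    rw [e]
    linarith

-- partial sum bounds, cubes
lemma sum3_upper {x : ℝ} (hx : 0 < x) (n : ℕ) :
    ∑ j ∈ range (n + 1), 1 / (x + j) ^ 3 ≤ 1 / x ^ 3 + 1 / (2 * x ^ 2) - 1 / (2 * (x + n) ^ 2) := by
  induction n with
  | zero => simp
  | succ n ih =>
    rw [Finset.sum_range_succ]
    have h := ineq3 (xj_pos hx n)
    push_cast
    push_cast at ih
    have e : x + ((n : ℝ) + 1) = (x + n) + 1 := by ring
    rw [e]
    linarith

lemma sum3_lower {x : ℝ} (hx : 0 < x) (n : ℕ) :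
    1 / (2 * x ^ 2) - 1 / (2 * (x + n) ^ 2) ≤ ∑ j ∈ range n, 1 / (x + j) ^ 3 := by
  induction n with
  | zero => simp
  | succ n ih =>
    rw [Finset.sum_range_succ]
    have h := ineq4 (xj_pos hx n)
    push_cast
    push_cast at ih
    have e : x + ((n : ℝ) + 1) = (x + n) + 1 := by ring
    rw [e]
    linarith

lemma tendsto_x_add : ∀ (x : ℝ), Tendsto (fun n : ℕ => x + (n : ℝ)) atTop atTop := by
  intro x
  exact tendsto_atTop_add_const_left _ _ tendsto_natCast_atTop_atTop

lemma tendsto_inv_x_add (x : ℝ) : Tendsto (fun n : ℕ => 1 / (x + (n : ℝ))) atTop (nhds 0) := by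
  simpa [one_div, Pi.inv_def] using (tendsto_x_add x).inv_tendsto_atTop

lemma tendsto_inv_sq_x_add (x : ℝ) :
    Tendsto (fun n : ℕ => 1 / (2 * (x + (n : ℝ)) ^ 2)) atTop (nhds 0) := by
  have h : Tendsto (fun n : ℕ => 2 * (x + (n : ℝ)) ^ 2) atTop atTop := by
    have h2 : Tendsto (fun n : ℕ => (x + (n : ℝ)) ^ 2) atTop atTop :=
      (tendsto_pow_atTop two_ne_zero).comp (tendsto_x_add x)
    exact h2.const_mul_atTop (by norm_num)
  simpa only [one_div, Pi.inv_def] using h.inv_tendsto_atTop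

-- trigamma bounds
lemma trigamma_lower {x : ℝ} (hx : 0 < x) : 1 / x ≤ trigamma x := by
  have hsum : Summable (fun j : ℕ => 1 / (x + j) ^ 2) := by
    apply summable_of_sum_range_le (fun j => by positivity)
    intro n
    calc ∑ j ∈ range n, 1 / (x + j) ^ 2 ≤ ∑ j ∈ range (n + 1), 1 / (x + j) ^ 2 := by
          apply Finset.sum_le_sum_of_subset_of_nonneg (Finset.range_subset_range.2 (by omega))
          intro j _ _; positivity
      _ ≤ 1 / x ^ 2 + 1 / x - 1 / (x + n) := sum2_upper hx n
      _ ≤ 1 / x ^ 2 + 1 / x := by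
          have : 0 < 1 / (x + (n : ℝ)) := by positivity
          linarith
  have key : ∀ n : ℕ, 1 / x - 1 / (x + n) ≤ trigamma x := fun n =>
    le_trans (sum2_lower hx n) (Summable.sum_le_tsum (range n) (fun j _ => by positivity) hsum)
  have hlim : Tendsto (fun n : ℕ => 1 / x - 1 / (x + (n : ℝ))) atTop (nhds (1 / x)) := by
    have := (tendsto_const_nhds (x := 1 / x)).sub (tendsto_inv_x_add x)
    rw [sub_zero] at this; exact this
  exact le_of_tendsto' hlim key

lemma trigamma_upper {x : ℝ} (hx : 0 < x) : trigamma x ≤ 1 / x + 1 / x ^ 2 := by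
  apply Real.tsum_le_of_sum_range_le (fun j => by positivity)
  intro n
  calc ∑ j ∈ range n, 1 / (x + j) ^ 2 ≤ ∑ j ∈ range (n + 1), 1 / (x + j) ^ 2 := by
        apply Finset.sum_le_sum_of_subset_of_nonneg (Finset.range_subset_range.2 (by omega))
        intro j _ _; positivity
    _ ≤ 1 / x ^ 2 + 1 / x - 1 / (x + n) := sum2_upper hx n
    _ ≤ 1 / x + 1 / x ^ 2 := by
        have : 0 < 1 / (x + (n : ℝ)) := by positivity
        linarith

lemma cubesum_upper {x : ℝ} (hx : 0 < x) :
    (∑' j : ℕ, 1 / (x + j) ^ 3) ≤ 1 / (2 * x ^ 2) + 1 / x ^ 3 := by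
  apply Real.tsum_le_of_sum_range_le (fun j => by positivity)
  intro n
  calc ∑ j ∈ range n, 1 / (x + j) ^ 3 ≤ ∑ j ∈ range (n + 1), 1 / (x + j) ^ 3 := by
        apply Finset.sum_le_sum_of_subset_of_nonneg (Finset.range_subset_range.2 (by omega))
        intro j _ _; positivity
    _ ≤ 1 / x ^ 3 + 1 / (2 * x ^ 2) - 1 / (2 * (x + n) ^ 2) := sum3_upper hx n
    _ ≤ 1 / (2 * x ^ 2) + 1 / x ^ 3 := by
        have : 0 < 1 / (2 * (x + (n : ℝ)) ^ 2) := by positivity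
        linarith

lemma cubesum_lower {x : ℝ} (hx : 0 < x) :
    1 / (2 * x ^ 2) ≤ ∑' j : ℕ, 1 / (x + j) ^ 3 := by
  have hsum : Summable (fun j : ℕ => 1 / (x + j) ^ 3) := by
    apply summable_of_sum_range_le (fun j => by positivity)
    intro n
    calc ∑ j ∈ range n, 1 / (x + j) ^ 3 ≤ ∑ j ∈ range (n + 1), 1 / (x + j) ^ 3 := by
          apply Finset.sum_le_sum_of_subset_of_nonneg (Finset.range_subset_range.2 (by omega))
          intro j _ _; positivity
      _ ≤ 1 / x ^ 3 + 1 / (2 * x ^ 2) - 1 / (2 * (x + n) ^ 2) := sum3_upper hx n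
      _ ≤ 1 / x ^ 3 + 1 / (2 * x ^ 2) := by
          have : 0 < 1 / (2 * (x + (n : ℝ)) ^ 2) := by positivity
          linarith
  have key : ∀ n : ℕ, 1 / (2 * x ^ 2) - 1 / (2 * (x + n) ^ 2) ≤ ∑' j : ℕ, 1 / (x + j) ^ 3 :=
    fun n => le_trans (sum3_lower hx n) (Summable.sum_le_tsum (range n) (fun j _ => by positivity) hsum)
  have hlim : Tendsto (fun n : ℕ => 1 / (2 * x ^ 2) - 1 / (2 * (x + (n : ℝ)) ^ 2)) atTop
      (nhds (1 / (2 * x ^ 2))) := by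
    have := (tendsto_const_nhds (x := 1 / (2 * x ^ 2))).sub (tendsto_inv_sq_x_add x)
    rw [sub_zero] at this; exact this
  exact le_of_tendsto' hlim key

theorem Phi_tendsto_one (q : ℝ) :
    Filter.Tendsto (fun r : ℝ => 2 * r * trigamma (r + 1 - q) + r ^ 2 * tetragamma (r + 1 - q))
      Filter.atTop (nhds 1) := by
  -- basic limits
  have hXtop : Tendsto (fun r : ℝ => r + 1 - q) atTop atTop := by
    have : (fun r : ℝ => r + 1 - q) = fun r : ℝ => r + (1 - q) := by funext r; ring
    rw [this]
    exact tendsto_atTop_add_const_right _ _ tendsto_id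
  have hu : Tendsto (fun r : ℝ => 1 / (r + 1 - q)) atTop (nhds 0) := by
    simpa [one_div, Pi.inv_def] using hXtop.inv_tendsto_atTop
  have hxpos : ∀ᶠ r : ℝ in atTop, 0 < r + 1 - q ∧ 0 ≤ r := by
    filter_upwards [eventually_ge_atTop (max 0 q)] with r hr
    have h0 : (0:ℝ) ≤ r := le_trans (le_max_left _ _) hr
    have hq : q ≤ r := le_trans (le_max_right _ _) hr
    constructor <;> linarith
  have ht : Tendsto (fun r : ℝ => r / (r + 1 - q)) atTop (nhds 1) := by
    have heq : (fun r : ℝ => r / (r + 1 - q)) =ᶠ[atTop]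
        fun r => 1 - (1 - q) * (1 / (r + 1 - q)) := by
      filter_upwards [hxpos] with r hr
      have hne : r + 1 - q ≠ 0 := ne_of_gt hr.1
      field_simp
      ring
    rw [Filter.tendsto_congr' heq]
    have := (tendsto_const_nhds (x := (1:ℝ))).sub ((tendsto_const_nhds (x := 1 - q)).mul hu)
    simpa using this
  -- lower and upper bounding functions
  set L : ℝ → ℝ := fun r => 2 * (r / (r + 1 - q)) - (r / (r + 1 - q)) ^ 2
      - 2 * (r / (r + 1 - q)) ^ 2 * (1 / (r + 1 - q)) with hL
  set U : ℝ → ℝ := fun r => 2 * (r / (r + 1 - q)) + 2 * (r / (r + 1 - q)) * (1 / (r + 1 - q))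
      - (r / (r + 1 - q)) ^ 2 with hU
  have hLlim : Tendsto L atTop (nhds 1) := by
    have : Tendsto L atTop (nhds (2 * 1 - 1 ^ 2 - 2 * 1 ^ 2 * 0)) :=
      (((tendsto_const_nhds (x := (2:ℝ))).mul ht).sub (ht.pow 2)).sub
        (((tendsto_const_nhds (x := (2:ℝ))).mul (ht.pow 2)).mul hu)
    norm_num at this; exact this
  have hUlim : Tendsto U atTop (nhds 1) := by
    have : Tendsto U atTop (nhds (2 * 1 + 2 * 1 * 0 - 1 ^ 2)) :=
      (((tendsto_const_nhds (x := (2:ℝ))).mul ht).add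
        (((tendsto_const_nhds (x := (2:ℝ))).mul ht).mul hu)).sub (ht.pow 2)
    norm_num at this; exact this
  apply tendsto_of_tendsto_of_tendsto_of_le_of_le' hLlim hUlim
  · -- L ≤ Φ
    filter_upwards [hxpos] with r hr
    obtain ⟨hx, hr0⟩ := hr
    set x := r + 1 - q with hxdef
    have hT1 : 1 / x ≤ trigamma x := trigamma_lower hx
    have hT2 : trigamma x ≤ 1 / x + 1 / x ^ 2 := trigamma_upper hx
    have hS1 : 1 / (2 * x ^ 2) ≤ ∑' j : ℕ, 1 / (x + j) ^ 3 := cubesum_lower hx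
    have hS2 : (∑' j : ℕ, 1 / (x + j) ^ 3) ≤ 1 / (2 * x ^ 2) + 1 / x ^ 3 := cubesum_upper hx
    have hxne : x ≠ 0 := ne_of_gt hx
    have h1 : 2 * r * (1 / x) ≤ 2 * r * trigamma x :=
      mul_le_mul_of_nonneg_left hT1 (by linarith)
    have h2 : r ^ 2 * (∑' j : ℕ, 1 / (x + j) ^ 3) ≤ r ^ 2 * (1 / (2 * x ^ 2) + 1 / x ^ 3) :=
      mul_le_mul_of_nonneg_left hS2 (by positivity)
    have hΦ : 2 * r * (1 / x) - 2 * (r ^ 2 * (1 / (2 * x ^ 2) + 1 / x ^ 3)) ≤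
        2 * r * trigamma x + r ^ 2 * tetragamma x := by
      rw [tetragamma]
      nlinarith
    refine le_trans (le_of_eq ?_) hΦ
    simp only [hL, ← hxdef]
    field_simp
    ring
  · -- Φ ≤ U
    filter_upwards [hxpos] with r hr
    obtain ⟨hx, hr0⟩ := hr
    set x := r + 1 - q with hxdef
    have hT2 : trigamma x ≤ 1 / x + 1 / x ^ 2 := trigamma_upper hx
    have hS1 : 1 / (2 * x ^ 2) ≤ ∑' j : ℕ, 1 / (x + j) ^ 3 := cubesum_lower hx
    have hxne : x ≠ 0 := ne_of_gt hx
    have h1 : 2 * r * trigamma x ≤ 2 * r * (1 / x + 1 / x ^ 2) :=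
      mul_le_mul_of_nonneg_left hT2 (by linarith)
    have hΦ : 2 * r * trigamma x + r ^ 2 * tetragamma x ≤
        2 * r * (1 / x + 1 / x ^ 2) - 2 * (r ^ 2 * (1 / (2 * x ^ 2))) := by
      rw [tetragamma]
      nlinarith
    refine le_trans hΦ (le_of_eq ?_)
    simp only [hU, ← hxdef]
    field_simp
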